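/- Securing stub ASes with simplex S*BGP (outgoing-only security) instead of full S*BGP does not change the routing outcome of any non-stub AS: because a stub AS exports no routes learned from neighbors, its route selection has no effect on the stable routes chosen by any other AS in the network, in any of the three security models. -/

import Mathlib

open scoped Classical

namespace SBGP

/-- Business relationship of a neighbor, from the point of view of a given AS. -/
inductive Rel
  | customer
  | peer
  | provider
deriving DecidableEq

/-- The three positions at which the secure-route preference step can be inserted. -/
inductive SecModel
  | first
  | second
  | third
deriving DecidableEq

/-- An AS-level graph with business relationships on its edges. -/
structure ASGraph (V : Type*) where
  adj : V → V → Bool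
  /-- `rel u v` is the relationship of `v` as seen from `u`
      (`customer` means `v` is `u`'s customer, etc.). -/
  rel : V → V → Rel
  adj_symm : ∀ u v, adj u v = adj v u
  adj_irrefl : ∀ v, adj v v = false
  rel_consistent : ∀ u v, adj u v = true →
    ((rel u v = Rel.customer ↔ rel v u = Rel.provider) ∧
     (rel u v = Rel.peer ↔ rel v u = Rel.peer))

variable {V : Type*}

def lpRank : Rel → ℕ
  | Rel.customer => 0
  | Rel.peer => 1
  | Rel.provider => 2

/-- The relationship of the next hop of a route (`none` for trivial routes). -/
def nextRel (G : ASGraph V) : List V → Option Rel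
  | a :: b :: _ => some (G.rel a b)
  | _ => none

/-- Local-preference value of a route (customer < peer < provider). -/
def lpVal (G : ASGraph V) : List V → ℕ
  | a :: b :: _ => lpRank (G.rel a b)
  | _ => 0

/-- `R` is a (nonempty) path in `G`. -/
def IsPath (G : ASGraph V) : List V → Prop
  | [] => False
  | [_] => True
  | a :: b :: rest => G.adj a b = true ∧ IsPath G (b :: rest)

/-- `R` is a simple route in `G` ending at `d`. -/
def IsRouteTo (G : ASGraph V) (R : List V) (d : V) : Prop :=
  R.Nodup ∧ IsPath G R ∧ R.getLast? = some d

/-- The export rule (Ex) along a route `a :: b :: c :: …`: each internal AS `b`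
announces its route (with next hop `c`) to `a` only if that route is a customer
route of `b`, or `a` is `b`'s customer. -/
def ExportOK (G : ASGraph V) : List V → Prop
  | a :: b :: c :: rest =>
      (G.rel b c = Rel.customer ∨ G.rel b a = Rel.customer) ∧
      ExportOK G (b :: c :: rest)
  | _ => True

/-- A route is secure iff every AS on it has deployed S*BGP and it does not
contain the attacker (the bogus route is insecure even if the attacker is in `S`). -/
def SecureRoute (S : Finset V) (m : Option V) (R : List V) : Prop :=
  (∀ v ∈ R, v ∈ S) ∧ (∀ m', m = some m' → m' ∉ R)

/-- A legitimate route: ends at the destination `d` and avoids the attacker. -/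
def LegitRoute (m : Option V) (d : V) (R : List V) : Prop :=
  R.getLast? = some d ∧ ∀ m', m = some m' → m' ∉ R

/-- Perceivable routes at `s` for destination `d` when the (optional) attacker `m`
announces the bogus path "m,d": either a genuine export-compliant route to `d`
avoiding `m`, or an export-compliant route to `m` extended by `m`'s claimed
(possibly nonexistent) edge to `d`. -/
def Perceivable (G : ASGraph V) (m : Option V) (d : V) (s : V) (R : List V) : Prop :=
  R.head? = some s ∧
  ((IsRouteTo G R d ∧ ExportOK G R ∧ ∀ m', m = some m' → m' ∉ R) ∨
   (∃ m' R', m = some m' ∧ R = R' ++ [d] ∧ IsRouteTo G R' m' ∧ d ∉ R' ∧ ExportOK G R'))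

/-- The rank of a route (smaller is better), encoding lexicographically the
ranking steps of the given security model: LP (customer > peer > provider),
SP (shorter > longer) and SecP (secure > insecure), in the order determined by
the model.  All components are `< Fintype.card V + 2`, so the encoding is
faithful on simple routes. -/
noncomputable def rankNat [Fintype V] (G : ASGraph V) (S : Finset V) (m : Option V)
    (mdl : SecModel) (R : List V) : ℕ :=
  let B := Fintype.card V + 2
  let lp := lpVal G R
  let len := R.length
  let sec : ℕ := if SecureRoute S m R then 0 else 1
  match mdl with
  | SecModel.first => sec * B * B + lp * B + len
  | SecModel.second => lp * B * B + sec * B + len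
  | SecModel.third => lp * B * B + len * B + sec

/-- `n` exports the route `R` (its currently selected route) to neighbor `s`:
always if `R` is a customer route of `n` or `n` originates `R`; otherwise only
if `s` is `n`'s customer. -/
def exportsTo (G : ASGraph V) (n s : V) : List V → Prop
  | _ :: c :: _ => G.rel n c = Rel.customer ∨ G.rel n s = Rel.customer
  | _ => True

/-- Routes available to `s` given the current selections `σ` of all ASes:
routes exported by neighbors (with BGP loop detection), together with the
attacker's bogus announcement "m,d" to each of its neighbors. -/
def Avail (G : ASGraph V) (m : Option V) (d : V) (σ : V → List V) (s : V)
    (R : List V) : Prop :=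
  (∃ n, G.adj s n = true ∧ (∀ m', m = some m' → n ≠ m') ∧ σ n ≠ [] ∧
      (σ n).head? = some n ∧ s ∉ σ n ∧ exportsTo G n s (σ n) ∧ R = s :: σ n) ∨
  (∃ m', m = some m' ∧ G.adj s m' = true ∧ s ≠ d ∧ R = [s, m', d])

/-- A stable routing state for destination `d`, secure deployment `S`,
attacker `m`, security model `mdl` and tiebreak `tb`: every AS (other than the
destination and the attacker) selects the best available route, where ties in
rank are broken by the strict tiebreak `tb`. -/
def Stable [Fintype V] (G : ASGraph V) (tb : V → List V → ℕ) (S : Finset V)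
    (m : Option V) (d : V) (mdl : SecModel) (σ : V → List V) : Prop :=
  σ d = [d] ∧
  (∀ m', m = some m' → σ m' = []) ∧
  ∀ s, s ≠ d → (∀ m', m = some m' → s ≠ m') →
    ((σ s = [] ∧ ∀ R, ¬ Avail G m d σ s R) ∨
     (Avail G m d σ s (σ s) ∧
      ∀ R, Avail G m d σ s R → R ≠ σ s →
        rankNat G S m mdl (σ s) < rankNat G S m mdl R ∨
        (rankNat G S m mdl (σ s) = rankNat G S m mdl R ∧ tb s (σ s) < tb s R)))

/-- `s` is happy: it selects a legitimate route to `d`, avoiding the attacker. -/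
def Happy (m : Option V) (d : V) (σ : V → List V) (s : V) : Prop :=
  σ s ≠ [] ∧ (σ s).getLast? = some d ∧ ∀ m', m = some m' → m' ∉ σ s

/-- The set of most-preferred perceivable routes of `s` (before the tiebreak step). -/
def BPR [Fintype V] (G : ASGraph V) (S : Finset V) (m : Option V) (d : V)
    (mdl : SecModel) (s : V) (R : List V) : Prop :=
  Perceivable G m d s R ∧
  ∀ R', Perceivable G m d s R' → rankNat G S m mdl R ≤ rankNat G S m mdl R'

/-- The number of happy source ASes (sources other than `m` and `d`). -/
noncomputable def happyCount [Fintype V] [DecidableEq V] (m d : V)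
    (σ : V → List V) : ℕ :=
  (Finset.univ.filter fun s => s ≠ m ∧ s ≠ d ∧ Happy (some m) d σ s).card

/-- The customer-provider hierarchy is acyclic. -/
def Hierarchy (G : ASGraph V) : Prop :=
  ∃ h : V → ℕ, ∀ u v, G.adj u v = true → G.rel u v = Rel.customer → h v < h u

/-- The tiebreak of every AS is deterministic (injective on routes). -/
def InjTB (tb : V → List V → ℕ) : Prop :=
  ∀ s, Function.Injective (tb s)

end SBGP

/-!
A stub `t` has no customers, so by the export rule it announces its selected route to no
neighbour; hence no other AS ever selects a route through `t`, and on `t`-free routes the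
rankings for `S` and `S.erase t` coincide. Along an exported route the rank strictly grows
(local preference cannot improve, security cannot be gained, the length grows), so a strong
induction on the rank of the selected route shows that the two stable states agree off `t`:
if they agree on all routes of smaller rank, then each state's choice at `v` is available
in the other, and best-route selection with a strict tiebreak forces the choices to coincide.
-/

namespace SBGP

section

variable {V : Type*}

def ExportsNone (G : ASGraph V) (σ : V → List V) (t : V) : Prop :=
  ∀ s, G.adj s t = true → σ t ≠ [] → ¬ exportsTo G t s (σ t)

theorem SecureRoute.of_cons {S : Finset V} {m : Option V} {s : V} {R : List V}
    (h : SecureRoute S m (s :: R)) : SecureRoute S m R :=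
  ⟨fun v hv => h.1 v (List.mem_cons_of_mem _ hv),
    fun m' hm' hmem => h.2 m' hm' (List.mem_cons_of_mem _ hmem)⟩

theorem secureRoute_erase_iff [DecidableEq V] {S : Finset V} {m : Option V} {t : V}
    {R : List V} (ht : t ∉ R) : SecureRoute (S.erase t) m R ↔ SecureRoute S m R := by
  refine and_congr_left' ⟨fun h v hv => Finset.mem_of_mem_erase (h v hv), fun h v hv => ?_⟩
  exact Finset.mem_erase.2 ⟨fun hvt => ht (hvt ▸ hv), h v hv⟩

theorem rankNat_erase_of_not_mem [Fintype V] [DecidableEq V] (G : ASGraph V) (S : Finset V)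
    (m : Option V) (mdl : SecModel) {t : V} {R : List V} (ht : t ∉ R) :
    rankNat G (S.erase t) m mdl R = rankNat G S m mdl R := by
  simp only [rankNat, secureRoute_erase_iff ht]

theorem lpVal_le_cons (G : ASGraph V) {s n : V} {R : List V} (hadj : G.adj s n = true)
    (hexp : exportsTo G n s (n :: R)) : lpVal G (n :: R) ≤ lpVal G (s :: n :: R) := by
  cases R with
  | nil => exact Nat.zero_le _
  | cons c R =>
    rcases hexp with hc | hs
    · simp [lpVal, hc, lpRank]
    · have hprov : G.rel s n = Rel.provider :=
        (G.rel_consistent n s (G.adj_symm s n ▸ hadj)).1.1 hs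
      simp only [lpVal, hprov]
      cases G.rel n c <;> simp [lpRank]

theorem rankNat_lt_cons [Fintype V] (G : ASGraph V) (S : Finset V) (m : Option V)
    (mdl : SecModel) {s n : V} {R : List V} (hadj : G.adj s n = true)
    (hexp : exportsTo G n s (n :: R)) :
    rankNat G S m mdl (n :: R) < rankNat G S m mdl (s :: n :: R) := by
  have hlp := lpVal_le_cons G hadj hexp
  have hsec : (if SecureRoute S m (n :: R) then 0 else 1) ≤
      (if SecureRoute S m (s :: n :: R) then 0 else 1) := by
    by_cases hsn : SecureRoute S m (s :: n :: R)
    · simp [hsn, hsn.of_cons]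
    · simp only [hsn, if_false]
      split_ifs <;> simp
  have hlen : (n :: R).length < (s :: n :: R).length := Nat.lt_succ_self _
  cases mdl <;> simp only [rankNat]
  · exact add_lt_add_of_le_of_lt (by gcongr) hlen
  · exact add_lt_add_of_le_of_lt (by gcongr) hlen
  · exact add_lt_add_of_lt_of_le (add_lt_add_of_le_of_lt (by gcongr) (by gcongr)) hsec

theorem Avail.exists_cons {G : ASGraph V} {m : Option V} {d s : V} {σ : V → List V}
    {R : List V} (hR : Avail G m d σ s R) : ∃ c R', G.adj s c = true ∧ R = s :: c :: R' := by
  rcases hR with ⟨n, hadj, -, -, hhead, -, -, rfl⟩ | ⟨m', -, hadj, -, rfl⟩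
  · obtain ⟨R', hR'⟩ := List.head?_eq_some_iff.1 hhead
    exact ⟨n, R', hadj, by rw [hR']⟩
  · exact ⟨m', [d], hadj, rfl⟩

theorem not_exportsTo_of_stub {G : ASGraph V} {t s c x : V} {R : List V}
    (hstub : ∀ u, G.adj t u = true → G.rel t u ≠ Rel.customer) (hs : G.adj t s = true)
    (hc : G.adj t c = true) : ¬ exportsTo G t s (x :: c :: R) := by
  rintro (h | h)
  exacts [hstub c hc h, hstub s hs h]

theorem Avail.of_agree_below [Fintype V] {G : ASGraph V} {S : Finset V} {m : Option V}
    {d t v : V} {mdl : SecModel} {σ₁ σ₂ : V → List V} {R : List V}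
    (hR : Avail G m d σ₁ v R) (hsil : ExportsNone G σ₁ t)
    (hagree : ∀ w, w ≠ t → σ₁ w ≠ [] →
      rankNat G S m mdl (σ₁ w) < rankNat G S m mdl R → σ₁ w = σ₂ w) :
    Avail G m d σ₂ v R := by
  rcases hR with ⟨n, hadj, hnm, hne, hhead, hnot, hexp, rfl⟩ | hbogus
  · have hnt : n ≠ t := by rintro rfl; exact hsil v hadj hne hexp
    obtain ⟨R', hR'⟩ := List.head?_eq_some_iff.1 hhead
    have heq : σ₁ n = σ₂ n := hagree n hnt hne <| by
      rw [hR']; exact rankNat_lt_cons G S m mdl hadj (hR' ▸ hexp)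
    exact Or.inl ⟨n, hadj, hnm, heq ▸ hne, heq ▸ hhead, heq ▸ hnot, heq ▸ hexp, heq ▸ rfl⟩
  · exact Or.inr hbogus

section Stable

variable [Fintype V] {G : ASGraph V} {tb : V → List V → ℕ} {S : Finset V} {m d t : V}
  {mdl : SecModel} {σ : V → List V}

theorem Stable.selected (h : Stable G tb S (some m) d mdl σ) {v : V} (hvd : v ≠ d)
    (hvm : v ≠ m) (hne : σ v ≠ []) :
    Avail G (some m) d σ v (σ v) ∧ ∀ R, Avail G (some m) d σ v R → R ≠ σ v →
      rankNat G S (some m) mdl (σ v) < rankNat G S (some m) mdl R ∨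
      (rankNat G S (some m) mdl (σ v) = rankNat G S (some m) mdl R ∧ tb v (σ v) < tb v R) :=
  (h.2.2 v hvd fun _ hm => Option.some.inj hm ▸ hvm).resolve_left fun hnil => hne hnil.1

theorem Stable.ne_nil_of_avail (h : Stable G tb S (some m) d mdl σ) {v : V} (hvd : v ≠ d)
    (hvm : v ≠ m) {R : List V} (hR : Avail G (some m) d σ v R) : σ v ≠ [] := by
  intro hnil
  rcases h.2.2 v hvd (fun _ hm => Option.some.inj hm ▸ hvm) with ⟨-, hno⟩ | ⟨hav, -⟩
  · exact hno R hR
  · obtain ⟨_, _, -, hcons⟩ := hav.exists_cons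
    exact List.cons_ne_nil _ _ (hcons.symm.trans hnil)

theorem Stable.exportsNone_of_stub (h : Stable G tb S (some m) d mdl σ)
    (hstub : ∀ u, G.adj t u = true → G.rel t u ≠ Rel.customer) (hdt : d ≠ t) (hmt : m ≠ t) :
    ExportsNone G σ t := by
  intro s hs hne
  obtain ⟨c, R, hc, hσt⟩ := (h.selected hdt.symm hmt.symm hne).1.exists_cons
  rw [hσt]
  exact not_exportsTo_of_stub hstub (by rwa [G.adj_symm] at hs) hc

theorem Stable.not_mem_of_exportsNone (h : Stable G tb S (some m) d mdl σ)
    (hsil : ExportsNone G σ t) (hdt : d ≠ t) (hmt : m ≠ t) {v : V} (hvt : v ≠ t) :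
    t ∉ σ v := by
  suffices ∀ L v, v ≠ t → (σ v).length ≤ L → t ∉ σ v from this _ v hvt le_rfl
  intro L
  induction L with
  | zero => intro v _ hlen; simp [List.eq_nil_of_length_eq_zero (Nat.le_zero.1 hlen)]
  | succ L ih =>
    intro v hvt hlen
    by_cases hvd : v = d
    · simp [hvd, h.1, hdt.symm]
    by_cases hvm : v = m
    · simp [hvm, h.2.1 m rfl]
    by_cases hne : σ v = []
    · simp [hne]
    rcases (h.selected hvd hvm hne).1 with ⟨n, hadj, -, hnne, -, -, hexp, hσv⟩ |
        ⟨m', hm', -, -, hσv⟩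
    · have hnt : n ≠ t := by rintro rfl; exact hsil v hadj hnne hexp
      rw [hσv] at hlen ⊢
      simp only [List.mem_cons, not_or]
      exact ⟨hvt.symm, ih n hnt (by simpa using hlen)⟩
    · cases hm'
      simp [hσv, hvt.symm, hmt.symm, hdt.symm]

variable {S₁ S₂ : Finset V} {σ₁ σ₂ : V → List V}

theorem Stable.eq_of_agree_below (h₁ : Stable G tb S₁ (some m) d mdl σ₁)
    (h₂ : Stable G tb S₂ (some m) d mdl σ₂) (hsil₁ : ExportsNone G σ₁ t)
    (hsil₂ : ExportsNone G σ₂ t) (hdt : d ≠ t) (hmt : m ≠ t)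
    (hagree : ∀ R, t ∉ R → rankNat G S₁ (some m) mdl R = rankNat G S₂ (some m) mdl R)
    {K : ℕ} (IH : ∀ w, w ≠ t →
      (σ₁ w ≠ [] ∧ rankNat G S₁ (some m) mdl (σ₁ w) < K) ∨
      (σ₂ w ≠ [] ∧ rankNat G S₂ (some m) mdl (σ₂ w) < K) → σ₁ w = σ₂ w)
    {v : V} (hvt : v ≠ t) (hne : σ₁ v ≠ []) (hK : rankNat G S₁ (some m) mdl (σ₁ v) ≤ K) :
    σ₁ v = σ₂ v := by
  by_cases hvd : v = d
  · rw [hvd, h₁.1, h₂.1]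
  have hvm : v ≠ m := by rintro rfl; exact hne (h₁.2.1 v rfl)
  obtain ⟨hav₁, hbest₁⟩ := h₁.selected hvd hvm hne
  have hav₁₂ : Avail G (some m) d σ₂ v (σ₁ v) :=
    hav₁.of_agree_below hsil₁ fun w hwt hw hlt => IH w hwt (Or.inl ⟨hw, hlt.trans_le hK⟩)
  obtain ⟨hav₂, hbest₂⟩ := h₂.selected hvd hvm (h₂.ne_nil_of_avail hvd hvm hav₁₂)
  by_contra hne₁₂
  have hr₁ := hagree _ (h₁.not_mem_of_exportsNone hsil₁ hdt hmt hvt)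
  have hr₂ := hagree _ (h₂.not_mem_of_exportsNone hsil₂ hdt hmt hvt)
  have hpref₂ := hbest₂ _ hav₁₂ hne₁₂
  have hK₂ : rankNat G S₂ (some m) mdl (σ₂ v) ≤ K := by omega
  have hav₂₁ : Avail G (some m) d σ₁ v (σ₂ v) :=
    hav₂.of_agree_below hsil₂ fun w hwt hw hlt => (IH w hwt (Or.inr ⟨hw, hlt.trans_le hK₂⟩)).symm
  have hpref₁ := hbest₁ _ hav₂₁ (Ne.symm hne₁₂)
  omega

theorem Stable.eq_of_exportsNone (h₁ : Stable G tb S₁ (some m) d mdl σ₁)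
    (h₂ : Stable G tb S₂ (some m) d mdl σ₂) (hsil₁ : ExportsNone G σ₁ t)
    (hsil₂ : ExportsNone G σ₂ t) (hdt : d ≠ t) (hmt : m ≠ t)
    (hagree : ∀ R, t ∉ R → rankNat G S₁ (some m) mdl R = rankNat G S₂ (some m) mdl R)
    {v : V} (hvt : v ≠ t) : σ₁ v = σ₂ v := by
  have key : ∀ K v, v ≠ t →
      (σ₁ v ≠ [] ∧ rankNat G S₁ (some m) mdl (σ₁ v) ≤ K) ∨
      (σ₂ v ≠ [] ∧ rankNat G S₂ (some m) mdl (σ₂ v) ≤ K) → σ₁ v = σ₂ v := by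
    intro K
    induction K using Nat.strong_induction_on with
    | _ K ih =>
      have IH : ∀ w, w ≠ t →
          (σ₁ w ≠ [] ∧ rankNat G S₁ (some m) mdl (σ₁ w) < K) ∨
          (σ₂ w ≠ [] ∧ rankNat G S₂ (some m) mdl (σ₂ w) < K) → σ₁ w = σ₂ w := by
        rintro w hwt (⟨hw, hlt⟩ | ⟨hw, hlt⟩)
        exacts [ih _ hlt w hwt (Or.inl ⟨hw, le_rfl⟩), ih _ hlt w hwt (Or.inr ⟨hw, le_rfl⟩)]
      rintro v hvt (⟨hne, hK⟩ | ⟨hne, hK⟩)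
      · exact h₁.eq_of_agree_below h₂ hsil₁ hsil₂ hdt hmt hagree IH hvt hne hK
      · exact (h₂.eq_of_agree_below h₁ hsil₂ hsil₁ hdt hmt (fun R hR => (hagree R hR).symm)
          (fun w hwt hw => (IH w hwt hw.symm).symm) hvt hne hK).symm
  by_cases h₁v : σ₁ v = []
  · by_cases h₂v : σ₂ v = []
    · rw [h₁v, h₂v]
    · exact key _ v hvt (Or.inr ⟨h₂v, le_rfl⟩)
  · exact key _ v hvt (Or.inl ⟨h₁v, le_rfl⟩)

end Stable

end

theorem simplex_stub_no_effect_general {V : Type*} [Fintype V] [DecidableEq V]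
    (G : ASGraph V) (tb : V → List V → ℕ)
    (t : V) (hstub : ∀ u, G.adj t u = true → G.rel t u ≠ Rel.customer)
    (mdl : SecModel) (m d : V) (hdt : d ≠ t) (hmt : m ≠ t)
    (S : Finset V) (σ σ' : V → List V)
    (hσ : Stable G tb S (some m) d mdl σ)
    (hσ' : Stable G tb (S.erase t) (some m) d mdl σ') :
    ∀ v, v ≠ t → σ v = σ' v := fun _ hvt =>
  hσ.eq_of_exportsNone hσ' (hσ.exportsNone_of_stub hstub hdt hmt)
    (hσ'.exportsNone_of_stub hstub hdt hmt) hdt hmt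
    (fun _ hR => (rankNat_erase_of_not_mem G S _ mdl hR).symm) hvt

/-- **Simplex S*BGP at stubs does not affect the rest of the network.**
A stub AS `t` (an AS with no customers) never re-exports learned routes, so
whether or not `t` itself is in the secure deployment (full S*BGP vs. simplex,
i.e. treating its incoming routes as insecure) changes only `t`'s own route
selection: for any destination `d ≠ t`, attacker `m ≠ t` and secure set `S`,
the stable routing states for `S` and for `S` with `t` removed agree at every
AS other than `t`, in any of the three security models. -/
theorem simplex_stub_no_effect {V : Type*} [Fintype V] [DecidableEq V]
    (G : ASGraph V) (tb : V → List V → ℕ) (hinj : InjTB tb)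
    (t : V) (hstub : ∀ u, G.adj t u = true → G.rel t u ≠ Rel.customer)
    (mdl : SecModel) (m d : V) (hdt : d ≠ t) (hmt : m ≠ t) (hmd : m ≠ d)
    (S : Finset V) (σ σ' : V → List V)
    (hσ : Stable G tb S (some m) d mdl σ)
    (hσ' : Stable G tb (S.erase t) (some m) d mdl σ') :
    ∀ v, v ≠ t → σ v = σ' v :=
  simplex_stub_no_effect_general G tb t hstub mdl m d hdt hmt S σ σ' hσ hσ'

end SBGP
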